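/- arXiv:2311.02759 — 2 statements merged into one kernel-verified Lean document; each statement's English description precedes it below -/
import Mathlib

section
/- Let A be a set and θ a set of labeled squares, i.e. θ ⊆ A^(2×2), such that θ is 2-transitive: for each of the two directions i ∈ {0,1}, the binary relation on A^2 obtained by reading squares in θ as pairs of their two i-faces is transitive. If γ ∈ A^(n×m) (n, m ≥ 2) is a grid all of whose unit squares (given by consecutive rows and columns) belong to θ, then the square formed by the four corners γ(0,0), γ(0,m-1), γ(n-1,0), γ(n-1,m-1) belongs to θ. -/
/-- The binary relation on `Fin 2 → A` reading a square `γ : Fin 2 → Fin 2 → A`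
(first index = row) as the pair of its two rows. -/
def rowRel {A : Type*} (θ : Set (Fin 2 → Fin 2 → A)) : Set ((Fin 2 → A) × (Fin 2 → A)) :=
  {p | ∃ γ ∈ θ, p.1 = γ 0 ∧ p.2 = γ 1}

/-- The binary relation reading a square as the pair of its two columns. -/
def colRel {A : Type*} (θ : Set (Fin 2 → Fin 2 → A)) : Set ((Fin 2 → A) × (Fin 2 → A)) :=
  {p | ∃ γ ∈ θ, p.1 = (fun r => γ r 0) ∧ p.2 = (fun r => γ r 1)}

/-- Auxiliary square built from two rows. -/
def sqOfRows {A : Type*} (a b : Fin 2 → A) : Fin 2 → Fin 2 → A :=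
  fun g₀ => if g₀ = 0 then a else b

lemma mem_of_rowRel {A : Type*} {θ : Set (Fin 2 → Fin 2 → A)} {a b : Fin 2 → A}
    (h : (a, b) ∈ rowRel θ) : sqOfRows a b ∈ θ := by
  obtain ⟨δ, hδ, h0, h1⟩ := h
  convert hδ using 1
  funext g₀
  fin_cases g₀
  · simpa [sqOfRows] using h0
  · simpa [sqOfRows] using h1

lemma rowRel_of_mem {A : Type*} {θ : Set (Fin 2 → Fin 2 → A)} {δ : Fin 2 → Fin 2 → A}
    (h : δ ∈ θ) : (δ 0, δ 1) ∈ rowRel θ := ⟨δ, h, rfl, rfl⟩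

lemma mem_of_colRel {A : Type*} {θ : Set (Fin 2 → Fin 2 → A)} {a b : Fin 2 → A}
    (h : (a, b) ∈ colRel θ) :
    (fun g₀ g₁ : Fin 2 => if g₁ = 0 then a g₀ else b g₀) ∈ θ := by
  obtain ⟨δ, hδ, h0, h1⟩ := h
  convert hδ using 1
  funext g₀ g₁
  fin_cases g₁ <;> simp <;> [exact congrFun h0 g₀; exact congrFun h1 g₀]

lemma colRel_of_mem {A : Type*} {θ : Set (Fin 2 → Fin 2 → A)} {δ : Fin 2 → Fin 2 → A}
    (h : δ ∈ θ) : ((fun r => δ r 0), (fun r => δ r 1)) ∈ colRel θ := ⟨δ, h, rfl, rfl⟩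

theorem stmt_1 {A : Type*} (θ : Set (Fin 2 → Fin 2 → A))
    (htransRow : ∀ a b c, (a, b) ∈ rowRel θ → (b, c) ∈ rowRel θ → (a, c) ∈ rowRel θ)
    (htransCol : ∀ a b c, (a, b) ∈ colRel θ → (b, c) ∈ colRel θ → (a, c) ∈ colRel θ)
    (n m : ℕ) (hn : 2 ≤ n) (hm : 2 ≤ m) (γ : Fin n → Fin m → A)
    (hcells : ∀ (r c : ℕ) (hr : r + 1 < n) (hc : c + 1 < m),
      (fun g₀ g₁ : Fin 2 =>
        γ ⟨r + g₀.val, by have := g₀.isLt; omega⟩ ⟨c + g₁.val, by have := g₁.isLt; omega⟩) ∈ θ) :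
    (fun g₀ g₁ : Fin 2 =>
      γ ⟨g₀.val * (n - 1), by have h := g₀.isLt; have : g₀.val * (n - 1) ≤ 1 * (n - 1) := Nat.mul_le_mul_right _ (by omega); omega⟩
        ⟨g₁.val * (m - 1), by have h := g₁.isLt; have : g₁.val * (m - 1) ≤ 1 * (m - 1) := Nat.mul_le_mul_right _ (by omega); omega⟩) ∈ θ := by
  -- Q: the square with rows r₀, r₁ and columns c₀, c₁ is in θ
  set Q : Fin n → Fin n → Fin m → Fin m → Prop := fun r₀ r₁ c₀ c₁ =>
    (fun g₀ g₁ : Fin 2 => γ (if g₀ = 0 then r₀ else r₁) (if g₁ = 0 then c₀ else c₁)) ∈ θ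
    with hQ
  -- column-direction transitivity for Q
  have qcol : ∀ r₀ r₁ c₀ c₁ c₂, Q r₀ r₁ c₀ c₁ → Q r₀ r₁ c₁ c₂ → Q r₀ r₁ c₀ c₂ := by
    intro r₀ r₁ c₀ c₁ c₂ h1 h2
    have h1' := colRel_of_mem (θ := θ) h1
    have h2' := colRel_of_mem (θ := θ) h2
    simp only [if_pos rfl] at h1' h2'
    have h1'' : ((fun g₀ : Fin 2 => γ (if g₀ = 0 then r₀ else r₁) c₀),
        (fun g₀ : Fin 2 => γ (if g₀ = 0 then r₀ else r₁) c₁)) ∈ colRel θ := by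
      convert h1' using 2 <;> funext g₀ <;> simp
    have h2'' : ((fun g₀ : Fin 2 => γ (if g₀ = 0 then r₀ else r₁) c₁),
        (fun g₀ : Fin 2 => γ (if g₀ = 0 then r₀ else r₁) c₂)) ∈ colRel θ := by
      convert h2' using 2 <;> funext g₀ <;> simp
    have := mem_of_colRel (htransCol _ _ _ h1'' h2'')
    convert this using 1
    funext g₀ g₁
    by_cases h : g₁ = 0 <;> simp [h]
  -- row-direction transitivity for Q
  have qrow : ∀ r₀ r₁ r₂ c₀ c₁, Q r₀ r₁ c₀ c₁ → Q r₁ r₂ c₀ c₁ → Q r₀ r₂ c₀ c₁ := by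
    intro r₀ r₁ r₂ c₀ c₁ h1 h2
    have h1' := rowRel_of_mem (θ := θ) h1
    have h2' := rowRel_of_mem (θ := θ) h2
    simp only [if_pos rfl] at h1' h2'
    have h1'' : ((fun g₁ : Fin 2 => γ r₀ (if g₁ = 0 then c₀ else c₁)),
        (fun g₁ : Fin 2 => γ r₁ (if g₁ = 0 then c₀ else c₁))) ∈ rowRel θ := by
      convert h1' using 2 <;> simp
    have h2'' : ((fun g₁ : Fin 2 => γ r₁ (if g₁ = 0 then c₀ else c₁)),
        (fun g₁ : Fin 2 => γ r₂ (if g₁ = 0 then c₀ else c₁))) ∈ rowRel θ := by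
      convert h2' using 2 <;> simp
    have := mem_of_rowRel (htransRow _ _ _ h1'' h2'')
    have heq : sqOfRows (fun g₁ : Fin 2 => γ r₀ (if g₁ = 0 then c₀ else c₁))
        (fun g₁ : Fin 2 => γ r₂ (if g₁ = 0 then c₀ else c₁))
        = (fun g₀ g₁ : Fin 2 => γ (if g₀ = 0 then r₀ else r₂) (if g₁ = 0 then c₀ else c₁)) := by
      funext g₀ g₁
      fin_cases g₀ <;> simp [sqOfRows]
    rw [heq] at this
    exact this
  -- cells give Q
  have qcell : ∀ (r c : ℕ) (hr : r + 1 < n) (hc : c + 1 < m),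
      Q ⟨r, by omega⟩ ⟨r + 1, hr⟩ ⟨c, by omega⟩ ⟨c + 1, hc⟩ := by
    intro r c hr hc
    have := hcells r c hr hc
    convert this using 1
    funext g₀ g₁
    fin_cases g₀ <;> fin_cases g₁ <;> simp <;> congr 1 <;> omega
  -- horizontal strips
  have strip : ∀ (r : ℕ) (hr : r + 1 < n) (c : ℕ) (hc : c + 1 < m),
      Q ⟨r, by omega⟩ ⟨r + 1, hr⟩ ⟨0, by omega⟩ ⟨c + 1, hc⟩ := by
    intro r hr c
    induction c with
    | zero => intro hc; exact qcell r 0 hr hc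
    | succ k ih =>
      intro hc
      exact qcol _ _ _ ⟨k + 1, by omega⟩ _ (ih (by omega)) (qcell r (k + 1) hr hc)
  have stripfull : ∀ (r : ℕ) (hr : r + 1 < n),
      Q ⟨r, by omega⟩ ⟨r + 1, hr⟩ ⟨0, by omega⟩ ⟨m - 1, by omega⟩ := by
    intro r hr
    have := strip r hr (m - 2) (by omega)
    convert this using 2
    omega
  -- vertical composition
  have vert : ∀ (r : ℕ) (hr : r + 1 < n),
      Q ⟨0, by omega⟩ ⟨r + 1, hr⟩ ⟨0, by omega⟩ ⟨m - 1, by omega⟩ := by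
    intro r
    induction r with
    | zero => intro hr; exact stripfull 0 hr
    | succ k ih =>
      intro hr
      exact qrow _ ⟨k + 1, by omega⟩ _ _ _ (ih (by omega)) (stripfull (k + 1) hr)
  have final : Q ⟨0, by omega⟩ ⟨n - 1, by omega⟩ ⟨0, by omega⟩ ⟨m - 1, by omega⟩ := by
    have := vert (n - 2) (by omega)
    convert this using 2
    omega
  rw [hQ] at final
  convert final using 1
  funext g₀ g₁
  fin_cases g₀ <;> fin_cases g₁ <;> simp <;> congr 1 <;> omega
end

section
/- Let s : ℕ³ → ℕ be an injection into ℕ ∖ {0,1,2,3} and t(0,0,0) = t(1,2,0) = 3, t = s otherwise, ℂ = ⟨ℕ; t⟩. Then the algebra ℂ' with underlying set ℕ whose basic operations are all the binary polynomials of ℂ is abelian: [1,1]_TC = 0 in ℂ'. Consequently, the binary term condition commutator is not determined by binary polynomials. -/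
/-- Terms in `n` variables over a signature with a single ternary operation symbol. -/
inductive Term3 (n : ℕ) : Type
  | var : Fin n → Term3 n
  | app : Term3 n → Term3 n → Term3 n → Term3 n

/-- Evaluation, interpreting the operation symbol as `t`. -/
def Term3.eval (t : ℕ → ℕ → ℕ → ℕ) {n : ℕ} : Term3 n → (Fin n → ℕ) → ℕ
  | Term3.var v, a => a v
  | Term3.app u₁ u₂ u₃, a => t (u₁.eval t a) (u₂.eval t a) (u₃.eval t a)

/-- `p` is a binary polynomial of `ℂ = ⟨ℕ; t⟩`:
`(x,y) ↦ r(x,y,c₁,…,c_m)` for a term `r` of `ℂ` and constants `cᵢ ∈ ℕ`. -/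
def IsBinPoly (t : ℕ → ℕ → ℕ → ℕ) (p : ℕ → ℕ → ℕ) : Prop :=
  ∃ (m : ℕ) (r : Term3 (2 + m)) (c : Fin m → ℕ),
    p = fun x y => r.eval t (Fin.append ![x, y] c)

/-- Terms over the algebra `ℂ'` whose basic operations are binary operations on `ℕ`;
each `app` node carries the binary operation it applies. -/
inductive TermB (n : ℕ) : Type
  | var : Fin n → TermB n
  | app : (ℕ → ℕ → ℕ) → TermB n → TermB n → TermB n

def TermB.eval {n : ℕ} : TermB n → (Fin n → ℕ) → ℕ
  | TermB.var v, a => a v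
  | TermB.app p u₁ u₂, a => p (u₁.eval a) (u₂.eval a)

/-- Every operation symbol occurring in the term satisfies `P`. -/
inductive TermB.UsesOnly {n : ℕ} (P : (ℕ → ℕ → ℕ) → Prop) : TermB n → Prop
  | var (v : Fin n) : TermB.UsesOnly P (TermB.var v)
  | app {p u₁ u₂} : P p → TermB.UsesOnly P u₁ → TermB.UsesOnly P u₂ →
      TermB.UsesOnly P (TermB.app p u₁ u₂)


namespace Stmt11

lemma append_cases {n m : ℕ} (v : Fin (n + m)) :
    (∃ i : Fin n, ∀ (a : Fin n → ℕ) (c : Fin m → ℕ), Fin.append a c v = a i) ∨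
    (∃ j : Fin m, ∀ (a : Fin n → ℕ) (c : Fin m → ℕ), Fin.append a c v = c j) := by
  induction v using Fin.addCases with
  | left i => exact Or.inl ⟨i, fun a c => Fin.append_left a c i⟩
  | right j => exact Or.inr ⟨j, fun a c => Fin.append_right a c j⟩


def Cst (q : ℕ → ℕ → ℕ) : Prop := ∀ a b a' b', q a b = q a' b'
def Hi (q : ℕ → ℕ → ℕ) : Prop := ∀ a b, 3 ≤ q a b
def LX (q : ℕ → ℕ → ℕ) : Prop :=
  (∀ a b b', q a b = q a b') ∧ (∀ a b a' b', q a b = q a' b' → a = a')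
def LY (q : ℕ → ℕ → ℕ) : Prop :=
  (∀ a b a', q a b = q a' b) ∧ (∀ a b a' b', q a b = q a' b' → b = b')
def Jnt (q : ℕ → ℕ → ℕ) : Prop :=
  ∀ a b a' b', q a b = q a' b' →
    (a = a' ∧ b = b') ∨ (a ≠ a' ∧ b ≠ b' ∧ a < 3 ∧ b < 3 ∧ a' < 3 ∧ b' < 3)
def GoodOp (q : ℕ → ℕ → ℕ) : Prop :=
  Cst q ∨ (∀ x y, q x y = x) ∨ (∀ x y, q x y = y) ∨ (Hi q ∧ (LX q ∨ LY q ∨ Jnt q))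

lemma good_lowval {q : ℕ → ℕ → ℕ} (hq : GoodOp q) {a b a' b' : ℕ}
    (hne : q a b ≠ q a' b') (hlow : q a b < 3) :
    (∀ x y, q x y = x) ∨ (∀ x y, q x y = y) := by
  rcases hq with hc | hx | hy | ⟨hhi, _⟩
  · exact absurd (hc a b a' b') hne
  · exact Or.inl hx
  · exact Or.inr hy
  · exact absurd (hhi a b) (by omega)

lemma special {q1 q2 : ℕ → ℕ → ℕ} (h1 : GoodOp q1) (h2 : GoodOp q2) {a b a' b' : ℕ}
    (e1 : q1 a b = 0) (e1' : q1 a' b' = 1) (e2 : q2 a b = 0) (e2' : q2 a' b' = 2) :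
    a ≠ a' ∧ b ≠ b' ∧ a < 3 ∧ b < 3 ∧ a' < 3 ∧ b' < 3 := by
  rcases good_lowval h1 (a:=a) (b:=b) (a':=a') (b':=b') (by rw [e1, e1']; omega) (by rw [e1]; omega) with p1 | p1 <;>
  rcases good_lowval h2 (a:=a) (b:=b) (a':=a') (b':=b') (by rw [e2, e2']; omega) (by rw [e2]; omega) with p2 | p2 <;>
  · rw [p1] at e1 e1'
    rw [p2] at e2 e2'
    omega

lemma kcl {q : ℕ → ℕ → ℕ} (h : GoodOp q) : Cst q ∨ LX q ∨ LY q ∨ Jnt q := by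
  rcases h with hc | hx | hy | ⟨_, hk⟩
  · exact Or.inl hc
  · refine Or.inr (Or.inl ⟨fun a b b' => by rw [hx, hx], fun a b a' b' e => by rwa [hx, hx] at e⟩)
  · refine Or.inr (Or.inr (Or.inl ⟨fun a b a' => by rw [hy, hy],
      fun a b a' b' e => by rwa [hy, hy] at e⟩))
  · exact Or.inr hk

lemma noSpecialLX {q1 q2 : ℕ → ℕ → ℕ} (g1 : GoodOp q1) (g2 : GoodOp q2)
    (k1 : Cst q1 ∨ LX q1) (k2 : Cst q2 ∨ LX q2) {a b a' b' : ℕ}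
    (e1 : q1 a b = 0) (e1' : q1 a' b' = 1) (e2 : q2 a b = 0) (e2' : q2 a' b' = 2) : False := by
  have notY : ∀ q : ℕ → ℕ → ℕ, (Cst q ∨ LX q) → (∀ x y, q x y = y) → False := by
    rintro q (hc | hl) hp
    · have h := hc 0 0 0 1
      rw [hp, hp] at h
      omega
    · have h := hl.2 0 0 1 0 (by rw [hp, hp])
      omega
  rcases good_lowval g1 (a:=a) (b:=b) (a':=a') (b':=b') (by rw [e1, e1']; omega) (by rw [e1]; omega) with p1 | p1
  · rcases good_lowval g2 (a:=a) (b:=b) (a':=a') (b':=b') (by rw [e2, e2']; omega) (by rw [e2]; omega) with p2 | p2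
    · rw [p1] at e1 e1'
      rw [p2] at e2 e2'
      omega
    · exact notY q2 k2 p2
  · exact notY q1 k1 p1

lemma noSpecialLY {q1 q2 : ℕ → ℕ → ℕ} (g1 : GoodOp q1) (g2 : GoodOp q2)
    (k1 : Cst q1 ∨ LY q1) (k2 : Cst q2 ∨ LY q2) {a b a' b' : ℕ}
    (e1 : q1 a b = 0) (e1' : q1 a' b' = 1) (e2 : q2 a b = 0) (e2' : q2 a' b' = 2) : False := by
  have notX : ∀ q : ℕ → ℕ → ℕ, (Cst q ∨ LY q) → (∀ x y, q x y = x) → False := by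
    rintro q (hc | hl) hp
    · have h := hc 0 0 1 0
      rw [hp, hp] at h
      omega
    · have h := hl.2 0 0 0 1 (by rw [hp, hp])
      omega
  rcases good_lowval g1 (a:=a) (b:=b) (a':=a') (b':=b') (by rw [e1, e1']; omega) (by rw [e1]; omega) with p1 | p1
  · exact notX q1 k1 p1
  · rcases good_lowval g2 (a:=a) (b:=b) (a':=a') (b':=b') (by rw [e2, e2']; omega) (by rw [e2]; omega) with p2 | p2
    · exact notX q2 k2 p2
    · rw [p1] at e1 e1'
      rw [p2] at e2 e2'
      omega

section TLemmas

variable {s t : ℕ → ℕ → ℕ → ℕ}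
variable (hinj : Function.Injective fun p : ℕ × ℕ × ℕ => s p.1 p.2.1 p.2.2)
variable (hrange : ∀ x y z, s x y z ∉ ({0, 1, 2, 3} : Set ℕ))
variable (ht1 : t 0 0 0 = 3) (ht2 : t 1 2 0 = 3)
variable (ht3 : ∀ x y z, (x, y, z) ≠ ((0 : ℕ), (0 : ℕ), (0 : ℕ)) →
      (x, y, z) ≠ ((1 : ℕ), (2 : ℕ), (0 : ℕ)) → t x y z = s x y z)

include hrange in
lemma s_ge (x y z : ℕ) : 4 ≤ s x y z := by
  have h := hrange x y z
  simp only [Set.mem_insert_iff, Set.mem_singleton_iff, not_or] at h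
  omega

include hinj hrange ht1 ht2 ht3

lemma t_ge (x y z : ℕ) : 3 ≤ t x y z := by
  by_cases h1 : (x, y, z) = ((0 : ℕ), (0 : ℕ), (0 : ℕ))
  · obtain ⟨hx, hy, hz⟩ : x = 0 ∧ y = 0 ∧ z = 0 := by simpa [Prod.ext_iff] using h1
    subst hx; subst hy; subst hz; omega
  · by_cases h2 : (x, y, z) = ((1 : ℕ), (2 : ℕ), (0 : ℕ))
    · obtain ⟨hx, hy, hz⟩ : x = 1 ∧ y = 2 ∧ z = 0 := by simpa [Prod.ext_iff] using h2
      subst hx; subst hy; subst hz; omega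
    · rw [ht3 x y z h1 h2]
      have := s_ge hrange x y z
      omega

lemma t_eq3 {x y z : ℕ} (h : t x y z = 3) :
    (x = 0 ∧ y = 0 ∧ z = 0) ∨ (x = 1 ∧ y = 2 ∧ z = 0) := by
  by_contra hc
  push_neg at hc
  rw [ht3 x y z (by simp [Prod.ext_iff]; tauto) (by simp [Prod.ext_iff]; tauto)] at h
  have := s_ge hrange x y z
  omega

lemma t_eq {x y z x' y' z' : ℕ} (h : t x y z = t x' y' z') :
    (x = x' ∧ y = y' ∧ z = z') ∨
    (x = 0 ∧ y = 0 ∧ z = 0 ∧ x' = 1 ∧ y' = 2 ∧ z' = 0) ∨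
    (x = 1 ∧ y = 2 ∧ z = 0 ∧ x' = 0 ∧ y' = 0 ∧ z' = 0) := by
  by_cases hx : t x y z = 3
  · have hx' : t x' y' z' = 3 := by rw [← h]; exact hx
    rcases t_eq3 hinj hrange ht1 ht2 ht3 hx with ⟨u1, u2, u3⟩ | ⟨u1, u2, u3⟩ <;>
    rcases t_eq3 hinj hrange ht1 ht2 ht3 hx' with ⟨v1, v2, v3⟩ | ⟨v1, v2, v3⟩ <;>
    omega
  · have n1 : (x, y, z) ≠ ((0 : ℕ), (0 : ℕ), (0 : ℕ)) := by
      intro h'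
      obtain ⟨hx0, hy0, hz0⟩ : x = 0 ∧ y = 0 ∧ z = 0 := by simpa [Prod.ext_iff] using h'
      exact hx (by rw [hx0, hy0, hz0]; exact ht1)
    have n2 : (x, y, z) ≠ ((1 : ℕ), (2 : ℕ), (0 : ℕ)) := by
      intro h'
      obtain ⟨hx0, hy0, hz0⟩ : x = 1 ∧ y = 2 ∧ z = 0 := by simpa [Prod.ext_iff] using h'
      exact hx (by rw [hx0, hy0, hz0]; exact ht2)
    have n3 : (x', y', z') ≠ ((0 : ℕ), (0 : ℕ), (0 : ℕ)) := by
      intro h'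
      obtain ⟨hx0, hy0, hz0⟩ : x' = 0 ∧ y' = 0 ∧ z' = 0 := by simpa [Prod.ext_iff] using h'
      exact hx (by rw [h, hx0, hy0, hz0]; exact ht1)
    have n4 : (x', y', z') ≠ ((1 : ℕ), (2 : ℕ), (0 : ℕ)) := by
      intro h'
      obtain ⟨hx0, hy0, hz0⟩ : x' = 1 ∧ y' = 2 ∧ z' = 0 := by simpa [Prod.ext_iff] using h'
      exact hx (by rw [h, hx0, hy0, hz0]; exact ht2)
    rw [ht3 x y z n1 n2, ht3 x' y' z' n3 n4] at h
    have := hinj (a₁ := (x, y, z)) (a₂ := (x', y', z')) h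
    left
    simpa [Prod.ext_iff] using this

lemma compLX {q1 q2 q3 : ℕ → ℕ → ℕ} (g1 : GoodOp q1) (g2 : GoodOp q2)
    (k1 : Cst q1 ∨ LX q1) (k2 : Cst q2 ∨ LX q2) (k3 : Cst q3 ∨ LX q3) :
    Cst (fun x y => t (q1 x y) (q2 x y) (q3 x y)) ∨
    LX (fun x y => t (q1 x y) (q2 x y) (q3 x y)) := by
  have d1 : ∀ a b b', q1 a b = q1 a b' := by
    rcases k1 with h | h
    exacts [fun a b b' => h a b a b', fun a b b' => h.1 a b b']
  have d2 : ∀ a b b', q2 a b = q2 a b' := by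
    rcases k2 with h | h
    exacts [fun a b b' => h a b a b', fun a b b' => h.1 a b b']
  have d3 : ∀ a b b', q3 a b = q3 a b' := by
    rcases k3 with h | h
    exacts [fun a b b' => h a b a b', fun a b b' => h.1 a b b']
  by_cases hall : Cst q1 ∧ Cst q2 ∧ Cst q3
  · refine Or.inl fun a b a' b' => ?_
    simp only
    rw [hall.1 a b a' b', hall.2.1 a b a' b', hall.2.2 a b a' b']
  · refine Or.inr ⟨fun a b b' => by simp only; rw [d1 a b b', d2 a b b', d3 a b b'], ?_⟩
    intro a b a' b' h
    simp only at h
    rcases t_eq hinj hrange ht1 ht2 ht3 h with ⟨e1, e2, e3⟩ |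
      ⟨e1, e2, e3, e1', e2', e3'⟩ | ⟨e1, e2, e3, e1', e2', e3'⟩
    · rcases k1 with c1 | l1
      · rcases k2 with c2 | l2
        · rcases k3 with c3 | l3
          · exact absurd ⟨c1, c2, c3⟩ hall
          · exact l3.2 _ _ _ _ e3
        · exact l2.2 _ _ _ _ e2
      · exact l1.2 _ _ _ _ e1
    · exact (noSpecialLX g1 g2 k1 k2 e1 e1' e2 e2').elim
    · exact (noSpecialLX g1 g2 k1 k2 e1' e1 e2' e2).elim

lemma compLY {q1 q2 q3 : ℕ → ℕ → ℕ} (g1 : GoodOp q1) (g2 : GoodOp q2)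
    (k1 : Cst q1 ∨ LY q1) (k2 : Cst q2 ∨ LY q2) (k3 : Cst q3 ∨ LY q3) :
    Cst (fun x y => t (q1 x y) (q2 x y) (q3 x y)) ∨
    LY (fun x y => t (q1 x y) (q2 x y) (q3 x y)) := by
  have d1 : ∀ a b a', q1 a b = q1 a' b := by
    rcases k1 with h | h
    exacts [fun a b a' => h a b a' b, fun a b a' => h.1 a b a']
  have d2 : ∀ a b a', q2 a b = q2 a' b := by
    rcases k2 with h | h
    exacts [fun a b a' => h a b a' b, fun a b a' => h.1 a b a']
  have d3 : ∀ a b a', q3 a b = q3 a' b := by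
    rcases k3 with h | h
    exacts [fun a b a' => h a b a' b, fun a b a' => h.1 a b a']
  by_cases hall : Cst q1 ∧ Cst q2 ∧ Cst q3
  · refine Or.inl fun a b a' b' => ?_
    simp only
    rw [hall.1 a b a' b', hall.2.1 a b a' b', hall.2.2 a b a' b']
  · refine Or.inr ⟨fun a b a' => by simp only; rw [d1 a b a', d2 a b a', d3 a b a'], ?_⟩
    intro a b a' b' h
    simp only at h
    rcases t_eq hinj hrange ht1 ht2 ht3 h with ⟨e1, e2, e3⟩ |
      ⟨e1, e2, e3, e1', e2', e3'⟩ | ⟨e1, e2, e3, e1', e2', e3'⟩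
    · rcases k1 with c1 | l1
      · rcases k2 with c2 | l2
        · rcases k3 with c3 | l3
          · exact absurd ⟨c1, c2, c3⟩ hall
          · exact l3.2 _ _ _ _ e3
        · exact l2.2 _ _ _ _ e2
      · exact l1.2 _ _ _ _ e1
    · exact (noSpecialLY g1 g2 k1 k2 e1 e1' e2 e2').elim
    · exact (noSpecialLY g1 g2 k1 k2 e1' e1 e2' e2).elim

lemma compJnt {q1 q2 q3 : ℕ → ℕ → ℕ} (g1 : GoodOp q1) (g2 : GoodOp q2)
    (hone : Jnt q1 ∨ Jnt q2 ∨ Jnt q3 ∨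
      ((LX q1 ∨ LX q2 ∨ LX q3) ∧ (LY q1 ∨ LY q2 ∨ LY q3))) :
    Jnt (fun x y => t (q1 x y) (q2 x y) (q3 x y)) := by
  intro a b a' b' h
  simp only at h
  rcases t_eq hinj hrange ht1 ht2 ht3 h with ⟨e1, e2, e3⟩ |
    ⟨e1, e2, e3, e1', e2', e3'⟩ | ⟨e1, e2, e3, e1', e2', e3'⟩
  · rcases hone with j | j | j | ⟨hx, hy⟩
    · exact j _ _ _ _ e1
    · exact j _ _ _ _ e2
    · exact j _ _ _ _ e3
    · refine Or.inl ⟨?_, ?_⟩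
      · rcases hx with l | l | l
        exacts [l.2 _ _ _ _ e1, l.2 _ _ _ _ e2, l.2 _ _ _ _ e3]
      · rcases hy with l | l | l
        exacts [l.2 _ _ _ _ e1, l.2 _ _ _ _ e2, l.2 _ _ _ _ e3]
  · exact Or.inr (special g1 g2 e1 e1' e2 e2')
  · obtain ⟨n1, n2, c1, c2, c3, c4⟩ := special g1 g2 e1' e1 e2' e2
    exact Or.inr ⟨n1.symm, n2.symm, c3, c4, c1, c2⟩

lemma goodComp {q1 q2 q3 : ℕ → ℕ → ℕ} (g1 : GoodOp q1) (g2 : GoodOp q2) (g3 : GoodOp q3) :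
    GoodOp (fun x y => t (q1 x y) (q2 x y) (q3 x y)) := by
  have hp : Hi (fun x y => t (q1 x y) (q2 x y) (q3 x y)) :=
    fun a b => t_ge hinj hrange ht1 ht2 ht3 _ _ _
  by_cases hj : Jnt q1 ∨ Jnt q2 ∨ Jnt q3
  · exact Or.inr (Or.inr (Or.inr ⟨hp, Or.inr (Or.inr
      (compJnt hinj hrange ht1 ht2 ht3 g1 g2 (by tauto)))⟩))
  · by_cases hx : LX q1 ∨ LX q2 ∨ LX q3
    · by_cases hy : LY q1 ∨ LY q2 ∨ LY q3
      · exact Or.inr (Or.inr (Or.inr ⟨hp, Or.inr (Or.inr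
          (compJnt hinj hrange ht1 ht2 ht3 g1 g2 (Or.inr (Or.inr (Or.inr ⟨hx, hy⟩)))))⟩))
      · have k1 : Cst q1 ∨ LX q1 := by rcases kcl g1 with h | h | h | h <;> tauto
        have k2 : Cst q2 ∨ LX q2 := by rcases kcl g2 with h | h | h | h <;> tauto
        have k3 : Cst q3 ∨ LX q3 := by rcases kcl g3 with h | h | h | h <;> tauto
        rcases compLX hinj hrange ht1 ht2 ht3 g1 g2 k1 k2 k3 with hc | hl
        · exact Or.inl hc
        · exact Or.inr (Or.inr (Or.inr ⟨hp, Or.inl hl⟩))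
    · have k1 : Cst q1 ∨ LY q1 := by rcases kcl g1 with h | h | h | h <;> tauto
      have k2 : Cst q2 ∨ LY q2 := by rcases kcl g2 with h | h | h | h <;> tauto
      have k3 : Cst q3 ∨ LY q3 := by rcases kcl g3 with h | h | h | h <;> tauto
      rcases compLY hinj hrange ht1 ht2 ht3 g1 g2 k1 k2 k3 with hc | hl
      · exact Or.inl hc
      · exact Or.inr (Or.inr (Or.inr ⟨hp, Or.inr (Or.inl hl)⟩))

lemma binPolyGood {p : ℕ → ℕ → ℕ} (hp : IsBinPoly t p) : GoodOp p := by
  obtain ⟨m, r, c, rfl⟩ := hp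
  induction r with
  | var v =>
    rcases append_cases (n := 2) (m := m) v with ⟨i, hi⟩ | ⟨j, hj⟩
    · fin_cases i
      · refine Or.inr (Or.inl fun x y => ?_)
        show Fin.append ![x, y] c v = x
        rw [hi]
        rfl
      · refine Or.inr (Or.inr (Or.inl fun x y => ?_))
        show Fin.append ![x, y] c v = y
        rw [hi]
        rfl
    · refine Or.inl fun a b a' b' => ?_
      show Fin.append ![a, b] c v = Fin.append ![a', b'] c v
      rw [hj, hj]
  | app r1 r2 r3 ih1 ih2 ih3 =>
    exact goodComp hinj hrange ht1 ht2 ht3 ih1 ih2 ih3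

lemma tri {k : ℕ} {f : TermB k} (hf : f.UsesOnly (IsBinPoly t)) :
    (∃ i, ∀ a, f.eval a = a i) ∨ (∃ c0, ∀ a, f.eval a = c0) ∨ (∀ a, 3 ≤ f.eval a) := by
  induction hf with
  | var v => exact Or.inl ⟨v, fun _ => rfl⟩
  | @app p u₁ u₂ hp h1 h2 ih1 ih2 =>
    rcases binPolyGood hinj hrange ht1 ht2 ht3 hp with hc | hx | hy | ⟨hhi, _⟩
    · exact Or.inr (Or.inl ⟨p 0 0, fun a => hc _ _ 0 0⟩)
    · rcases ih1 with ⟨i, hi⟩ | ⟨c0, hc0⟩ | hb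
      · exact Or.inl ⟨i, fun a => by simp only [TermB.eval]; rw [hx]; exact hi a⟩
      · exact Or.inr (Or.inl ⟨c0, fun a => by simp only [TermB.eval]; rw [hx]; exact hc0 a⟩)
      · exact Or.inr (Or.inr fun a => by simp only [TermB.eval]; rw [hx]; exact hb a)
    · rcases ih2 with ⟨i, hi⟩ | ⟨c0, hc0⟩ | hb
      · exact Or.inl ⟨i, fun a => by simp only [TermB.eval]; rw [hy]; exact hi a⟩
      · exact Or.inr (Or.inl ⟨c0, fun a => by simp only [TermB.eval]; rw [hy]; exact hc0 a⟩)
      · exact Or.inr (Or.inr fun a => by simp only [TermB.eval]; rw [hy]; exact hb a)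
    · exact Or.inr (Or.inr fun a => by simp only [TermB.eval]; exact hhi _ _)

end TLemmas

end Stmt11


theorem stmt_11 (s : ℕ → ℕ → ℕ → ℕ)
    (hinj : Function.Injective (fun p : ℕ × ℕ × ℕ => s p.1 p.2.1 p.2.2))
    (hrange : ∀ x y z, s x y z ∉ ({0, 1, 2, 3} : Set ℕ))
    (t : ℕ → ℕ → ℕ → ℕ)
    (ht1 : t 0 0 0 = 3) (ht2 : t 1 2 0 = 3)
    (ht3 : ∀ x y z, (x, y, z) ≠ ((0 : ℕ), (0 : ℕ), (0 : ℕ)) →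
      (x, y, z) ≠ ((1 : ℕ), (2 : ℕ), (0 : ℕ)) → t x y z = s x y z) :
    ∀ (n m : ℕ) (f : TermB (n + m)), f.UsesOnly (IsBinPoly t) →
      ∀ (a b : Fin n → ℕ) (c d : Fin m → ℕ),
        f.eval (Fin.append a c) = f.eval (Fin.append b c) →
        f.eval (Fin.append a d) = f.eval (Fin.append b d) := by
  intro n m f hf
  induction hf with
  | var v =>
    intro a b c d h
    rcases Stmt11.append_cases v with ⟨i, hi⟩ | ⟨j, hj⟩
    · show Fin.append a d v = Fin.append b d v
      rw [hi a d, hi b d]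
      show a i = b i
      have h' : Fin.append a c v = Fin.append b c v := h
      rwa [hi a c, hi b c] at h'
    · show Fin.append a d v = Fin.append b d v
      rw [hj a d, hj b d]
  | @app p u₁ u₂ hp h1 h2 ih1 ih2 =>
    intro a b c d hcc
    simp only [TermB.eval] at hcc ⊢
    rcases Stmt11.binPolyGood hinj hrange ht1 ht2 ht3 hp with hc | hx | hy | ⟨hhi, hk⟩
    · exact hc _ _ _ _
    · rw [hx, hx] at hcc ⊢
      exact ih1 a b c d hcc
    · rw [hy, hy] at hcc ⊢
      exact ih2 a b c d hcc
    · rcases hk with ⟨dep, inj⟩ | ⟨dep, inj⟩ | hJ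
      · have e := inj _ _ _ _ hcc
        have e' := ih1 a b c d e
        rw [e']
        exact dep _ _ _
      · have e := inj _ _ _ _ hcc
        have e' := ih2 a b c d e
        rw [e']
        exact dep _ _ _
      · rcases hJ _ _ _ _ hcc with ⟨e1, e2⟩ | ⟨ne1, ne2, l1, l2, l3, l4⟩
        · rw [ih1 a b c d e1, ih2 a b c d e2]
        · rcases Stmt11.tri hinj hrange ht1 ht2 ht3 h1 with ⟨i, hi⟩ | ⟨c0, hc0⟩ | hb
          · rcases Stmt11.tri hinj hrange ht1 ht2 ht3 h2 with ⟨j, hj⟩ | ⟨c0, hc0⟩ | hb2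
            · rcases Stmt11.append_cases i with ⟨i0, hL⟩ | ⟨j0, hR⟩
              · rcases Stmt11.append_cases j with ⟨j1, hL2⟩ | ⟨j1, hR2⟩
                · rw [hi, hi, hj, hj, hL a c, hL b c, hL2 a c, hL2 b c] at hcc
                  rw [hi, hi, hj, hj, hL a d, hL b d, hL2 a d, hL2 b d]
                  exact hcc
                · rw [hj, hj, hR2 a c, hR2 b c] at ne2
                  exact absurd rfl ne2
              · rw [hi, hi, hR a c, hR b c] at ne1
                exact absurd rfl ne1
            · rw [hc0, hc0] at ne2
              exact absurd rfl ne2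
            · have := hb2 (Fin.append a c)
              omega
          · rw [hc0, hc0] at ne1
            exact absurd rfl ne1
          · have := hb (Fin.append a c)
            omega
end
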